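/- If m^{1+κ} · ∏_{j=1}^{d-1} ⟨θ_j m⟩ ≥ c(κ) holds for all positive integers m, then the quantity ν(L)^d := μ(L) · ∏_{j=1}^{d-1} 2^{−l_j−1} satisfies ν(L)^d > c₂(κ) · 2^{−κ|L|₁/(κ+1)}, where c₂(κ) = (c(κ)·2^{−(d−1)κ})^{1/(1+κ)}. -/

import Mathlib

/-!
If `q ≠ 0` satisfies `⟨θ_j q⟩ ≤ 2^(-l_j-1)` for all `j`, irrationality of the `θ_j` makes these
inequalities strict, so the hypothesis at `m = |q|` gives `c < |q|^(1+κ) P` with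
`P = ∏ 2^(-l_j-1) = 2^(-|L|₁-n)`, `n = d - 1`. Hence every such `|q|` exceeds
`(c / P)^(1/(1+κ))`, and so does their minimum `μ(L)`, the minimum being over a nonempty set of
integers by Dirichlet's theorem. Multiplying by `P` gives the bound, since
`(c / P)^(1/(1+κ)) P = c₂(κ) 2^(-κ|L|₁/(κ+1))`.
-/

open scoped BigOperators

/-- Distance from a real number to the nearest integer. -/
noncomputable def distInt (x : ℝ) : ℝ := |x - round x|

/-- The dyadic minimum `μ(L)` of the lattice `Λ_θ`. -/
noncomputable def dyadicMin (n : ℕ) (θ : Fin n → ℝ) (L : Fin n → ℕ) : ℝ :=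
  sInf {t : ℝ | ∃ md : ℤ, md ≠ 0 ∧
    (∀ j, distInt (θ j * md) ≤ (2 : ℝ) ^ (-(L j : ℝ) - 1)) ∧ t = |(md : ℝ)|}

lemma distInt_le_abs_sub_intCast (x : ℝ) (k : ℤ) : distInt x ≤ |x - k| :=
  round_le x k

lemma distInt_neg (x : ℝ) : distInt (-x) = distInt x := by
  refine le_antisymm ?_ ?_
  · calc distInt (-x) ≤ |-x - ((-round x : ℤ) : ℝ)| := distInt_le_abs_sub_intCast _ _
      _ = distInt x := by rw [distInt, ← abs_neg]; push_cast; ring_nf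
  · calc distInt x ≤ |x - ((-round (-x) : ℤ) : ℝ)| := distInt_le_abs_sub_intCast _ _
      _ = distInt (-x) := by rw [distInt, ← abs_neg]; push_cast; ring_nf

lemma distInt_mul_abs (x y : ℝ) : distInt (x * |y|) = distInt (x * y) := by
  rcases abs_choice y with h | h <;> simp [h, distInt_neg]

lemma distInt_sub_le_abs_fract_sub (x y : ℝ) :
    distInt (x - y) ≤ |Int.fract x - Int.fract y| := by
  calc distInt (x - y) ≤ |x - y - ((⌊x⌋ - ⌊y⌋ : ℤ) : ℝ)| := distInt_le_abs_sub_intCast _ _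
    _ = |Int.fract x - Int.fract y| := by rw [Int.fract, Int.fract]; push_cast; ring_nf

lemma Irrational.distInt {x : ℝ} (hx : Irrational x) : Irrational (distInt x) := by
  have h : Irrational (x - round x) := hx.sub_intCast _
  rcases abs_choice (x - round x) with habs | habs <;> rw [_root_.distInt, habs]
  exacts [h, h.neg]

/-- Dirichlet's simultaneous approximation theorem: pigeonhole on the boxes
`∏ j, [k_j / K_j, (k_j + 1) / K_j)` containing the fractional parts of `θ * m`, `m ≤ ∏ j, K j`. -/
theorem exists_ne_zero_forall_distInt_mul_le_inv {ι : Type*} [Fintype ι] (θ : ι → ℝ)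
    (K : ι → ℕ) (hK : ∀ j, 0 < K j) :
    ∃ q : ℤ, q ≠ 0 ∧ ∀ j, distInt (θ j * q) ≤ (K j : ℝ)⁻¹ := by
  classical
  let box : ℕ → ι → ℕ := fun m j => ⌊Int.fract (θ j * m) * K j⌋₊
  have hbox : Set.MapsTo box (Finset.range (∏ j, K j + 1))
      (Fintype.piFinset fun j => Finset.range (K j)) := by
    intro m _
    simp only [Finset.coe_range, Fintype.coe_piFinset, Set.mem_pi, Set.mem_univ,
      Set.mem_Iio, forall_const, box]
    intro j
    have hKj : (0 : ℝ) < K j := by exact_mod_cast hK j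
    exact (Nat.floor_lt (by positivity)).2 (by nlinarith [Int.fract_lt_one (θ j * m)])
  obtain ⟨a, -, b, -, hab, hbox_eq⟩ :=
    Finset.exists_ne_map_eq_of_card_lt_of_maps_to (by simp [Fintype.card_piFinset]) hbox
  refine ⟨b - a, sub_ne_zero.2 (by exact_mod_cast hab.symm), fun j => ?_⟩
  have hKj : (0 : ℝ) < K j := by exact_mod_cast hK j
  have hfloor : ⌊Int.fract (θ j * b) * K j⌋ = ⌊Int.fract (θ j * a) * K j⌋ := by
    rw [← Int.natCast_floor_eq_floor (by positivity), ← Int.natCast_floor_eq_floor (by positivity)]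
    exact_mod_cast (congrFun hbox_eq j).symm
  have hclose := Int.abs_sub_lt_one_of_floor_eq_floor hfloor
  rw [← sub_mul, abs_mul, abs_of_pos hKj, ← lt_div_iff₀ hKj, one_div] at hclose
  calc distInt (θ j * ((b - a : ℤ) : ℝ)) = distInt (θ j * b - θ j * a) := by push_cast; ring_nf
    _ ≤ _ := distInt_sub_le_abs_fract_sub _ _
    _ ≤ _ := hclose.le

lemma two_rpow_neg_natCast_sub_one (l : ℕ) :
    (2 : ℝ) ^ (-(l : ℝ) - 1) = (((2 : ℚ) ^ (l + 1))⁻¹ : ℚ) := by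
  rw [show -(l : ℝ) - 1 = -((l + 1 : ℕ) : ℝ) by push_cast; ring, Real.rpow_neg zero_le_two,
    Real.rpow_natCast]
  norm_num

/-- The set defining `μ(L)` is nonempty by Dirichlet (otherwise `sInf` would be the junk value
`0`) and consists of integers, so `⌊b⌋ + 1` is a lower bound. -/
lemma lt_dyadicMin {n : ℕ} {θ : Fin n → ℝ} {L : Fin n → ℕ} {b : ℝ}
    (hb : ∀ q : ℤ, q ≠ 0 → (∀ j, distInt (θ j * q) ≤ (2 : ℝ) ^ (-(L j : ℝ) - 1)) →
      b < |(q : ℝ)|) :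
    b < dyadicMin n θ L := by
  obtain ⟨q₀, hq₀, hq₀_le⟩ :=
    exists_ne_zero_forall_distInt_mul_le_inv θ (fun j => 2 ^ (L j + 1)) fun j => by positivity
  refine lt_of_lt_of_le (Int.lt_floor_add_one b) (le_csInf ⟨_, q₀, hq₀, fun j => ?_, rfl⟩ ?_)
  · simpa [two_rpow_neg_natCast_sub_one] using hq₀_le j
  · rintro t ⟨q, hq, hq_le, rfl⟩
    have hlt := hb q hq hq_le
    rw [← Int.cast_abs, ← Int.floor_lt] at hlt
    exact_mod_cast Int.add_one_le_of_lt hlt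

lemma div_prod_rpow_inv_lt_abs {ι : Type*} [Fintype ι] [Nonempty ι] {θ : ι → ℝ}
    (hθ : ∀ j, Irrational (θ j)) {p c : ℝ} (hp : 0 < p) (hc : 0 ≤ c)
    (happrox : ∀ m : ℕ, 0 < m → c ≤ (m : ℝ) ^ p * ∏ j, distInt (θ j * m))
    {δ : ι → ℚ} {q : ℤ} (hq : q ≠ 0) (hqδ : ∀ j, distInt (θ j * q) ≤ δ j) :
    (c / ∏ j, (δ j : ℝ)) ^ (1 / p) < |(q : ℝ)| := by
  have habs : ((q.natAbs : ℕ) : ℝ) = |(q : ℝ)| := by rw [Nat.cast_natAbs, Int.cast_abs]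
  have hdist_pos : ∀ j, 0 < distInt (θ j * q) := fun j =>
    lt_of_le_of_ne (abs_nonneg _) ((hθ j).mul_intCast hq).distInt.ne_zero.symm
  have hdist_lt : ∀ j, distInt (θ j * q) < δ j := fun j =>
    lt_of_le_of_ne (hqδ j) (((hθ j).mul_intCast hq).distInt.ne_rat _)
  have hδ_pos : 0 < ∏ j, (δ j : ℝ) :=
    Finset.prod_pos fun j _ => (hdist_pos j).trans (hdist_lt j)
  have hlt : c < |(q : ℝ)| ^ p * ∏ j, (δ j : ℝ) := by
    calc c ≤ |(q : ℝ)| ^ p * ∏ j, distInt (θ j * |(q : ℝ)|) := by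
          simpa only [habs] using happrox q.natAbs (Int.natAbs_pos.2 hq)
      _ = |(q : ℝ)| ^ p * ∏ j, distInt (θ j * q) := by simp only [distInt_mul_abs]
      _ < |(q : ℝ)| ^ p * ∏ j, (δ j : ℝ) :=
          mul_lt_mul_of_pos_left
            (Finset.prod_lt_prod_of_nonempty (fun j _ => hdist_pos j) (fun j _ => hdist_lt j)
              Finset.univ_nonempty)
            (Real.rpow_pos_of_pos (abs_pos.2 (Int.cast_ne_zero.2 hq)) _)
  rw [one_div, Real.rpow_inv_lt_iff_of_pos (div_nonneg hc hδ_pos.le) (abs_nonneg _) hp,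
    div_lt_iff₀ hδ_pos]
  exact hlt

lemma rpow_mul_two_rpow_eq_div_two_rpow_rpow_mul {c κ s t : ℝ} (hc : 0 ≤ c) (hκ : 1 + κ ≠ 0) :
    (c * 2 ^ (-t * κ)) ^ (1 / (1 + κ)) * 2 ^ (-κ * s / (κ + 1))
      = (c / 2 ^ (-s - t)) ^ (1 / (1 + κ)) * 2 ^ (-s - t) := by
  rw [div_eq_mul_inv c, ← Real.rpow_neg zero_le_two,
    Real.mul_rpow hc (by positivity), Real.mul_rpow hc (by positivity),
    ← Real.rpow_mul zero_le_two, ← Real.rpow_mul zero_le_two]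
  simp only [mul_assoc, ← Real.rpow_add two_pos]
  congr 2
  rw [add_comm κ]
  field_simp
  ring

theorem hyperbolic_norm_lower_bound (n : ℕ) (hn : 1 ≤ n) (θ : Fin n → ℝ)
    (hθ : ∀ j, Irrational (θ j)) (κ c : ℝ) (hκ : 0 < κ) (hc : 0 < c)
    (happrox : ∀ m : ℕ, 0 < m → c ≤ (m : ℝ) ^ (1 + κ) * ∏ j, distInt (θ j * m)) :
    ∀ L : Fin n → ℕ,
      (c * 2 ^ (-(n : ℝ) * κ)) ^ (1 / (1 + κ)) * 2 ^ (-κ * (∑ j, (L j : ℝ)) / (κ + 1))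
        < dyadicMin n θ L * ∏ j, (2 : ℝ) ^ (-(L j : ℝ) - 1) := by
  intro L
  have : Nonempty (Fin n) := ⟨⟨0, hn⟩⟩
  have hμ : (c / ∏ j, (2 : ℝ) ^ (-(L j : ℝ) - 1)) ^ (1 / (1 + κ)) < dyadicMin n θ L :=
    lt_dyadicMin fun q hq hqL => by
      simp only [two_rpow_neg_natCast_sub_one] at hqL ⊢
      exact div_prod_rpow_inv_lt_abs (δ := fun j => ((2 : ℚ) ^ (L j + 1))⁻¹) hθ (by linarith)
        hc.le happrox hq hqL
  have hP : ∏ j, (2 : ℝ) ^ (-(L j : ℝ) - 1) = 2 ^ (-(∑ j, (L j : ℝ)) - n) := by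
    rw [← Real.rpow_sum_of_pos two_pos, Finset.sum_sub_distrib, Finset.sum_neg_distrib]
    simp
  calc _ = (c / ∏ j, (2 : ℝ) ^ (-(L j : ℝ) - 1)) ^ (1 / (1 + κ))
          * ∏ j, (2 : ℝ) ^ (-(L j : ℝ) - 1) := by
        rw [hP]; exact rpow_mul_two_rpow_eq_div_two_rpow_rpow_mul hc.le (by linarith)
    _ < _ := mul_lt_mul_of_pos_right hμ (by positivity)
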